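/- arXiv:math/0601440 — 7 statements merged into one kernel-verified Lean document; each statement's English description precedes it below -/
import Mathlib

section
/- Let τ : [0,S] → ℝ be C¹ with strictly increasing derivative k = τ', with |τ(s)| < π for s ∈ (0,S) and τ(0), τ(S) ∈ [-π, π]. If ∫₀ˢ sin(τ(s)) ds = 0, then τ(0) + τ(S) > 0. -/
open Real Set

/-!
Suppose `α + β ≤ 0`, where `α = τ 0` and `β = τ S`. The tangent angle `τ` is strictly convex.
If `α, β ≤ 0`, then `τ < 0` on the interior, so `∫ sin τ < 0`. Otherwise, after reversing the
arc, `α > 0 > β`, and convexity makes `τ` change sign exactly once, at some `c`. Then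
`F s = k c * ∫₀ˢ sin τ + cos (τ s)` has derivative `(k c - k s) * sin (τ s)`, which is positive
away from `c` because `k c - k s` and `τ s` have the same sign. The chord condition gives
`F 0 = cos α` and `F S = cos β`, so `cos α < cos β`, whereas `0 < α ≤ -β ≤ π` forces
`cos β ≤ cos α`.
-/

structure IsShortSpiral (S : ℝ) (τ k : ℝ → ℝ) : Prop where
  pos : 0 < S
  hasDerivAt : ∀ s, HasDerivAt τ (k s) s
  strictMonoOn : StrictMonoOn k (Icc 0 S)
  abs_lt_pi : ∀ s ∈ Ioo 0 S, |τ s| < π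
  left_mem : τ 0 ∈ Icc (-π) π
  right_mem : τ S ∈ Icc (-π) π

namespace StrictConvexOn

variable {f : ℝ → ℝ} {a b c x : ℝ}

theorem pos_of_lt_of_eq_zero (hf : StrictConvexOn ℝ (Icc a b) f) (hc : c ∈ Icc a b)
    (hfc : f c = 0) (hfb : f b < 0) (hx : x ∈ Ico a c) : 0 < f x := by
  have hcb : c < b := hc.2.lt_of_ne (by rintro rfl; linarith)
  have hxb : x < b := hx.2.trans hcb
  have := hf.lt_on_openSegment ⟨hx.1, hxb.le⟩ ⟨hc.1.trans hc.2, le_rfl⟩ hxb.ne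
    (by rw [openSegment_eq_Ioo hxb]; exact ⟨hx.2, hcb⟩)
  rw [hfc] at this
  exact (lt_max_iff.mp this).resolve_right (by linarith)

theorem neg_of_gt_of_eq_zero (hf : StrictConvexOn ℝ (Icc a b) f) (hc : c ∈ Icc a b)
    (hfc : f c = 0) (hfb : f b < 0) (hx : x ∈ Ioc c b) : f x < 0 := by
  rcases hx.2.lt_or_eq with hxb | rfl
  · have hcb : c < b := hx.1.trans hxb
    have := hf.lt_on_openSegment hc ⟨hc.1.trans hcb.le, le_rfl⟩ hcb.ne
      (by rw [openSegment_eq_Ioo hcb]; exact ⟨hx.1, hxb⟩)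
    rwa [hfc, max_eq_left hfb.le] at this
  · exact hfb

end StrictConvexOn

namespace IsShortSpiral

variable {S : ℝ} {τ k : ℝ → ℝ}

theorem continuous (h : IsShortSpiral S τ k) : Continuous τ :=
  continuous_iff_continuousAt.2 fun s => (h.hasDerivAt s).continuousAt

theorem continuous_sin_comp (h : IsShortSpiral S τ k) : Continuous fun s => sin (τ s) :=
  continuous_sin.comp' h.continuous

theorem strictConvexOn (h : IsShortSpiral S τ k) : StrictConvexOn ℝ (Icc 0 S) τ := by
  refine StrictMonoOn.strictConvexOn_of_deriv (convex_Icc 0 S) h.continuous.continuousOn ?_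
  rw [interior_Icc, show deriv τ = k from funext fun s => (h.hasDerivAt s).deriv]
  exact h.strictMonoOn.mono Ioo_subset_Icc_self

theorem reverse (h : IsShortSpiral S τ k) :
    IsShortSpiral S (fun s => τ (S - s)) (fun s => -k (S - s)) where
  pos := h.pos
  hasDerivAt s := by
    simpa [Function.comp_def] using
      (h.hasDerivAt (S - s)).comp s ((hasDerivAt_id s).const_sub S)
  strictMonoOn x hx y hy hxy := by
    simp only [neg_lt_neg_iff]
    exact h.strictMonoOn ⟨by linarith [hy.2], by linarith [hy.1]⟩
      ⟨by linarith [hx.2], by linarith [hx.1]⟩ (by linarith)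
  abs_lt_pi s hs := h.abs_lt_pi (S - s) ⟨by linarith [hs.2], by linarith [hs.1]⟩
  left_mem := by simpa using h.right_mem
  right_mem := by simpa using h.left_mem

theorem pos_left_or_pos_right (h : IsShortSpiral S τ k)
    (hint : ∫ s in (0:ℝ)..S, sin (τ s) = 0) : 0 < τ 0 ∨ 0 < τ S := by
  by_contra! hle
  have hsin : ∀ s ∈ Ioo 0 S, 0 < -sin (τ s) := fun s hs => by
    have hτ := h.strictConvexOn.lt_on_openSegment (left_mem_Icc.2 h.pos.le)
      (right_mem_Icc.2 h.pos.le) h.pos.ne (by rwa [openSegment_eq_Ioo h.pos])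
    exact neg_pos.2 (sin_neg_of_neg_of_neg_pi_lt (hτ.trans_le (max_le hle.1 hle.2))
      (abs_lt.1 (h.abs_lt_pi s hs)).1)
  have := intervalIntegral.intervalIntegral_pos_of_pos_on (f := fun s => -sin (τ s))
    (h.continuous_sin_comp.neg.intervalIntegrable 0 S) hsin h.pos
  rw [intervalIntegral.integral_neg, hint] at this
  linarith

theorem cos_lt_cos_of_pos_of_neg (h : IsShortSpiral S τ k)
    (hint : ∫ s in (0:ℝ)..S, sin (τ s) = 0) (h0 : 0 < τ 0) (hS : τ S < 0) :
    cos (τ 0) < cos (τ S) := by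
  obtain ⟨c, hc, hτc⟩ : ∃ c ∈ Icc 0 S, τ c = 0 :=
    intermediate_value_Icc' h.pos.le h.continuous.continuousOn ⟨hS.le, h0.le⟩
  have hc0 : 0 < c := hc.1.lt_of_ne (by rintro rfl; linarith)
  have hcS : c < S := hc.2.lt_of_ne (by rintro rfl; linarith)
  set F : ℝ → ℝ := fun s => k c * (∫ u in (0:ℝ)..s, sin (τ u)) + cos (τ s)
  have hF : ∀ s, HasDerivAt F ((k c - k s) * sin (τ s)) s := fun s =>
    (((h.continuous_sin_comp.integral_hasStrictDerivAt 0 s).hasDerivAt.const_mul (k c)).add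
      (h.hasDerivAt s).cos).congr_deriv (by ring)
  have hFc : Continuous F := continuous_iff_continuousAt.2 fun s => (hF s).continuousAt
  have hleft : StrictMonoOn F (Icc 0 c) :=
    strictMonoOn_of_deriv_pos (convex_Icc 0 c) hFc.continuousOn fun s hs => by
      rw [interior_Icc] at hs
      have hτ := h.strictConvexOn.pos_of_lt_of_eq_zero hc hτc hS ⟨hs.1.le, hs.2⟩
      rw [(hF s).deriv]
      exact mul_pos (sub_pos.2 (h.strictMonoOn ⟨hs.1.le, (hs.2.trans hcS).le⟩ hc hs.2))
        (sin_pos_of_pos_of_lt_pi hτ (abs_lt.1 (h.abs_lt_pi s ⟨hs.1, hs.2.trans hcS⟩)).2)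
  have hright : StrictMonoOn F (Icc c S) :=
    strictMonoOn_of_deriv_pos (convex_Icc c S) hFc.continuousOn fun s hs => by
      rw [interior_Icc] at hs
      have hτ := h.strictConvexOn.neg_of_gt_of_eq_zero hc hτc hS ⟨hs.1, hs.2.le⟩
      rw [(hF s).deriv]
      exact mul_pos_of_neg_of_neg
        (sub_neg.2 (h.strictMonoOn hc ⟨(hc0.trans hs.1).le, hs.2.le⟩ hs.1))
        (sin_neg_of_neg_of_neg_pi_lt hτ (abs_lt.1 (h.abs_lt_pi s ⟨hc0.trans hs.1, hs.2⟩)).1)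
  have hF0S := (hleft ⟨le_rfl, hc0.le⟩ ⟨hc0.le, le_rfl⟩ hc0).trans
    (hright ⟨le_rfl, hcS.le⟩ ⟨hcS.le, le_rfl⟩ hcS)
  simpa only [F, intervalIntegral.integral_same, hint, mul_zero, zero_add] using hF0S

theorem add_pos_of_pos_left (h : IsShortSpiral S τ k)
    (hint : ∫ s in (0:ℝ)..S, sin (τ s) = 0) (h0 : 0 < τ 0) : 0 < τ 0 + τ S := by
  by_contra! hsum
  have hcos : cos (τ S) ≤ cos (τ 0) := by
    rw [← cos_neg (τ S)]
    exact cos_le_cos_of_nonneg_of_le_pi h0.le (by linarith [h.right_mem.1]) (by linarith)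
  linarith [h.cos_lt_cos_of_pos_of_neg hint h0 (by linarith)]

theorem add_pos_of_pos_right (h : IsShortSpiral S τ k)
    (hint : ∫ s in (0:ℝ)..S, sin (τ s) = 0) (hS : 0 < τ S) : 0 < τ 0 + τ S := by
  have hint' : ∫ s in (0:ℝ)..S, sin (τ (S - s)) = 0 := by
    simpa [hint] using intervalIntegral.integral_comp_sub_left (a := 0) (b := S) (sin ∘ τ) S
  have := h.reverse.add_pos_of_pos_left hint' (by simpa using hS)
  simpa [add_comm] using this

end IsShortSpiral

/-- Vogt's theorem for short spirals: if the tangent angle `τ` is `C¹` with strictly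
increasing derivative `k` on `[0,S]`, `|τ s| < π` on the interior, boundary angles in
`[-π,π]`, and `∫₀ˢ sin (τ s) ds = 0`, then `τ 0 + τ S > 0`. -/
theorem vogt_short_spiral (S : ℝ) (τ k : ℝ → ℝ) (hS : 0 < S)
    (hderiv : ∀ s, HasDerivAt τ (k s) s)
    (hk : StrictMonoOn k (Set.Icc 0 S))
    (hshort : ∀ s ∈ Set.Ioo 0 S, |τ s| < π)
    (hα : τ 0 ∈ Set.Icc (-π) π) (hβ : τ S ∈ Set.Icc (-π) π)
    (hint : ∫ s in (0:ℝ)..S, Real.sin (τ s) = 0) :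
    0 < τ 0 + τ S := by
  have h : IsShortSpiral S τ k := ⟨hS, hderiv, hk, hshort, hα, hβ⟩
  rcases h.pos_left_or_pos_right hint with h0 | hS0
  · exact h.add_pos_of_pos_left hint h0
  · exact h.add_pos_of_pos_right hint hS0
end

section
/- The invariant Q(K₁,K₂) is unchanged if the line element on a circle is moved along that circle: if (x₁',y₁',τ₁') is obtained from (x₁,y₁,τ₁) by moving along the circle of curvature k₁ (i.e., x₁' = x₁ + (sin(τ₁+t) − sin τ₁)/k₁, y₁' = y₁ − (cos(τ₁+t) − cos τ₁)/k₁, τ₁' = τ₁ + t for k₁ ≠ 0), then Q((x₁',y₁',τ₁',k₁), K₂) = Q((x₁,y₁,τ₁,k₁), K₂). -/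
open Real

/-- The inversive invariant `Q` of a pair of curvature elements. -/
noncomputable def Q (x₁ y₁ τ₁ k₁ x₂ y₂ τ₂ k₂ : ℝ) : ℝ :=
  (1/4) * k₁ * k₂ * ((x₂ - x₁)^2 + (y₂ - y₁)^2) + Real.sin ((τ₂ - τ₁)/2)^2
    + (1/2) * k₂ * ((x₂ - x₁) * Real.sin τ₁ - (y₂ - y₁) * Real.cos τ₁)
    - (1/2) * k₁ * ((x₂ - x₁) * Real.sin τ₂ - (y₂ - y₁) * Real.cos τ₂)

/-!
Writing the first line element as `p₁ = c₁ + u₁ / k₁` with `c₁` the centre of its circle and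
`u₁ = (sin τ₁, -cos τ₁)`, the terms of `Q` containing `u₁` cancel up to
`sin² (Δτ/2) + cos (Δτ) / 2 = 1/2`. So for `k₁ ≠ 0` the invariant depends on the first curvature
element only through `k₁` and `c₁`, and moving the line element along its circle fixes `c₁`.
-/

noncomputable def circleCenter (x y τ k : ℝ) : ℝ × ℝ :=
  (x - sin τ / k, y + cos τ / k)

noncomputable def QOfCenter (c : ℝ × ℝ) (k₁ x₂ y₂ τ₂ k₂ : ℝ) : ℝ :=
  (1/4) * k₁ * k₂ * ((x₂ - c.1)^2 + (y₂ - c.2)^2) - k₂ / (4 * k₁)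
    - (1/2) * k₁ * ((x₂ - c.1) * sin τ₂ - (y₂ - c.2) * cos τ₂) + 1/2

theorem circleCenter_move_along (x y τ k t : ℝ) :
    circleCenter (x + (sin (τ + t) - sin τ) / k) (y - (cos (τ + t) - cos τ) / k) (τ + t) k =
      circleCenter x y τ k := by
  simp only [circleCenter, Prod.mk.injEq]
  constructor <;> ring

theorem sin_sq_half (θ : ℝ) : sin (θ / 2) ^ 2 = (1 - cos θ) / 2 := by
  rw [sin_sq_eq_half_sub, mul_div_cancel₀ θ two_ne_zero]
  ring

theorem Q_eq_QOfCenter {k₁ : ℝ} (hk₁ : k₁ ≠ 0) (x₁ y₁ τ₁ x₂ y₂ τ₂ k₂ : ℝ) :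
    Q x₁ y₁ τ₁ k₁ x₂ y₂ τ₂ k₂ = QOfCenter (circleCenter x₁ y₁ τ₁ k₁) k₁ x₂ y₂ τ₂ k₂ := by
  rw [Q, QOfCenter, circleCenter, sin_sq_half, cos_sub]
  field_simp
  linear_combination (-2 * k₂) * sin_sq_add_cos_sq τ₁

/-- `Q` is unchanged when the line element of the first circle is moved along
that circle (curvature `k₁ ≠ 0`, moving by tangent-angle increment `t`). -/
theorem Q_move_along_circle (x₁ y₁ τ₁ k₁ x₂ y₂ τ₂ k₂ t : ℝ) (hk₁ : k₁ ≠ 0) :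
    Q (x₁ + (Real.sin (τ₁ + t) - Real.sin τ₁) / k₁)
      (y₁ - (Real.cos (τ₁ + t) - Real.cos τ₁) / k₁)
      (τ₁ + t) k₁ x₂ y₂ τ₂ k₂ = Q x₁ y₁ τ₁ k₁ x₂ y₂ τ₂ k₂ := by
  rw [Q_eq_QOfCenter hk₁, Q_eq_QOfCenter hk₁, circleCenter_move_along]
end

section
/- If K₁ and K₂ are curvature elements of two circles with nonzero curvatures k₁, k₂ and D is the distance between their centers, then Q(K₁,K₂) = [(k₁k₂D)² − (k₂−k₁)²] / (4 k₁ k₂). -/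
open Real

/-- For two circles with nonzero curvatures `k₁, k₂` and distance `D` between their
centers `(xᵢ - sin τᵢ / kᵢ, yᵢ + cos τᵢ / kᵢ)`, one has
`Q = ((k₁k₂D)² - (k₂-k₁)²)/(4k₁k₂)`. -/
theorem Q_two_circles (x₁ y₁ τ₁ k₁ x₂ y₂ τ₂ k₂ : ℝ) (hk₁ : k₁ ≠ 0) (hk₂ : k₂ ≠ 0)
    (D : ℝ)
    (hD : D = Real.sqrt (((x₂ - Real.sin τ₂ / k₂) - (x₁ - Real.sin τ₁ / k₁))^2 +
                         ((y₂ + Real.cos τ₂ / k₂) - (y₁ + Real.cos τ₁ / k₁))^2)) :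
    Q x₁ y₁ τ₁ k₁ x₂ y₂ τ₂ k₂ = ((k₁ * k₂ * D)^2 - (k₂ - k₁)^2) / (4 * k₁ * k₂) := by
  have hD2 : D^2 = ((x₂ - Real.sin τ₂ / k₂) - (x₁ - Real.sin τ₁ / k₁))^2 +
      ((y₂ + Real.cos τ₂ / k₂) - (y₁ + Real.cos τ₁ / k₁))^2 := by
    rw [hD, Real.sq_sqrt (by positivity)]
  have hs : Real.sin ((τ₂ - τ₁)/2)^2 = (1 - Real.cos (τ₂ - τ₁)) / 2 := by
    have h := Real.cos_sq ((τ₂ - τ₁)/2)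
    have h' := Real.sin_sq_add_cos_sq ((τ₂ - τ₁)/2)
    rw [show 2*((τ₂ - τ₁)/2) = τ₂ - τ₁ by ring] at h
    linarith
  have hc : Real.cos (τ₂ - τ₁) = Real.cos τ₂ * Real.cos τ₁ + Real.sin τ₂ * Real.sin τ₁ :=
    Real.cos_sub _ _
  have h1 : Real.sin τ₁ ^ 2 + Real.cos τ₁ ^ 2 = 1 := Real.sin_sq_add_cos_sq τ₁
  have h2 : Real.sin τ₂ ^ 2 + Real.cos τ₂ ^ 2 = 1 := Real.sin_sq_add_cos_sq τ₂
  have hD2' : (k₁ * k₂ * D)^2 = (k₁ * k₂ * (x₂ - x₁) - (k₁ * Real.sin τ₂ - k₂ * Real.sin τ₁))^2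
      + (k₁ * k₂ * (y₂ - y₁) + (k₁ * Real.cos τ₂ - k₂ * Real.cos τ₁))^2 := by
    rw [mul_pow, mul_pow, hD2]
    field_simp
    ring
  unfold Q
  rw [hs, hc, eq_div_iff (by simp [hk₁, hk₂]), ← sub_eq_zero] at *
  linear_combination -hD2' - k₁^2 * h2 - k₂^2 * h1
end

section
/- Suppose real numbers κ₁, κ₂, α, β satisfy Q = (κ₁ + sin α)(κ₂ − sin β) + sin²((α+β)/2) ≤ 0 and sin((α+β)/2) ≠ 0. If κ₁ < κ₂ then κ₁ < −sin α and κ₂ > sin β; if κ₁ > κ₂ then κ₁ > −sin α and κ₂ < sin β. -/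
open Real

lemma key_aux (a b w c : ℝ) (hab : a * b + w^2 ≤ 0) (hw : w^2 > 0)
    (hc : c^2 ≤ 1) (hlt : b - a + 2*w*c > 0) : a < 0 ∧ b > 0 := by
  have habneg : a * b < 0 := by nlinarith
  rcases mul_neg_iff.mp habneg with ⟨ha, hb⟩ | ⟨ha, hb⟩
  · exfalso
    have h1 : 0 < 2*w*c - (a - b) := by linarith
    have h2 : 0 < 2*w*c + (a - b) := by linarith
    have h3 := mul_pos h1 h2
    have h4 : w^2 * c^2 ≤ w^2 := by nlinarith
    nlinarith [sq_nonneg (a + b)]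
  · exact ⟨ha, hb⟩

/-- End conditions of a normalized spiral arc: if
`Q = (κ₁ + sin α)(κ₂ - sin β) + sin²((α+β)/2) ≤ 0` and `sin((α+β)/2) ≠ 0`, then
`κ₁ < κ₂` forces `κ₁ < -sin α` and `κ₂ > sin β`, while `κ₁ > κ₂` forces
`κ₁ > -sin α` and `κ₂ < sin β`. -/
theorem end_conditions (κ₁ κ₂ α β : ℝ)
    (hQ : (κ₁ + Real.sin α) * (κ₂ - Real.sin β) + Real.sin ((α + β)/2)^2 ≤ 0)
    (hω : Real.sin ((α + β)/2) ≠ 0) :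
    (κ₁ < κ₂ → κ₁ < -Real.sin α ∧ κ₂ > Real.sin β) ∧
    (κ₁ > κ₂ → κ₁ > -Real.sin α ∧ κ₂ < Real.sin β) := by
  set w := Real.sin ((α + β)/2) with hwdef
  set c := Real.cos ((α - β)/2) with hcdef
  have hsum : Real.sin α + Real.sin β = 2 * w * c := by
    have h1 := Real.sin_add ((α+β)/2) ((α-β)/2)
    have h2 := Real.sin_sub ((α+β)/2) ((α-β)/2)
    have e1 : (α+β)/2 + (α-β)/2 = α := by ring
    have e2 : (α+β)/2 - (α-β)/2 = β := by ring
    rw [e1] at h1; rw [e2] at h2; rw [h1, h2, hwdef, hcdef]; ring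
  have hw2 : w^2 > 0 := by positivity
  have hc2 : c^2 ≤ 1 := by
    have := Real.neg_one_le_cos ((α - β)/2)
    have := Real.cos_le_one ((α - β)/2)
    nlinarith
  constructor
  · intro hlt
    have := key_aux (κ₁ + Real.sin α) (κ₂ - Real.sin β) w c hQ hw2 hc2 (by nlinarith)
    constructor <;> nlinarith [this.1, this.2]
  · intro hgt
    have hc2' : (-c)^2 ≤ 1 := by nlinarith
    have := key_aux (κ₂ - Real.sin β) (κ₁ + Real.sin α) w (-c) (by nlinarith) hw2 hc2' (by nlinarith)
    constructor <;> nlinarith [this.1, this.2]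
end

section
/- If two curvature elements share a common tangent line, i.e. K₁ = (x₁,y₁,τ₁,k₁) and K₂ = (x₁ + t cos τ₁, y₁ + t sin τ₁, τ₁, k₂) with t ≠ 0, then Q(K₁,K₂) = k₁k₂t²/4. In particular Q(K₁,K₂) ≤ 0 forces k₁k₂ ≤ 0. -/
open Real

/-- Two curvature elements on a common tangent line satisfy `Q = k₁k₂t²/4`;
in particular `Q ≤ 0` forces `k₁k₂ ≤ 0`. -/
theorem Q_double_tangent (x₁ y₁ τ₁ k₁ k₂ t : ℝ) (ht : t ≠ 0) :
    Q x₁ y₁ τ₁ k₁ (x₁ + t * Real.cos τ₁) (y₁ + t * Real.sin τ₁) τ₁ k₂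
      = k₁ * k₂ * t^2 / 4 ∧
    (Q x₁ y₁ τ₁ k₁ (x₁ + t * Real.cos τ₁) (y₁ + t * Real.sin τ₁) τ₁ k₂ ≤ 0 →
      k₁ * k₂ ≤ 0) := by
  have hpyth := Real.sin_sq_add_cos_sq τ₁
  have hq : Q x₁ y₁ τ₁ k₁ (x₁ + t * Real.cos τ₁) (y₁ + t * Real.sin τ₁) τ₁ k₂
      = k₁ * k₂ * t^2 / 4 := by
    simp only [Q, sub_self, zero_div, Real.sin_zero]
    linear_combination (k₁ * k₂ * t^2 / 4) * hpyth
  refine ⟨hq, fun h => ?_⟩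
  rw [hq] at h
  nlinarith [sq_pos_of_ne_zero ht, sq_nonneg t]
end

section
/- The locus of tangency points T(b) = ((b²−1)/Δ, 2b sin γ/Δ), Δ = b² + 2b cos γ + 1, as b ranges over ℝ \ {roots of Δ}, lies on the circle Γ through (−1,0) and (1,0) given implicitly by −sin γ (x² + y² − 1) − 2y cos γ = 0. -/
open Real

/-! On the unit circle `s² + c² = 1` one has `(b² - 1)² + (2bs)² = Δ² - 4bcΔ` for
`Δ = b² + 2bc + 1`, so the point `T(b)` satisfies `x² + y² - 1 = -4bc/Δ = -2cy/s`,
which is the equation of `Γ` multiplied out. -/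

lemma tangencyPoint_normSq_sub_one {s c : ℝ} (hsc : s ^ 2 + c ^ 2 = 1) {b : ℝ}
    (hΔ : b ^ 2 + 2 * b * c + 1 ≠ 0) :
    ((b ^ 2 - 1) / (b ^ 2 + 2 * b * c + 1)) ^ 2
        + ((2 * b * s) / (b ^ 2 + 2 * b * c + 1)) ^ 2 - 1
      = -4 * b * c / (b ^ 2 + 2 * b * c + 1) := by
  rw [div_pow, div_pow, ← add_div, div_sub_one (pow_ne_zero 2 hΔ),
    div_eq_div_iff (pow_ne_zero 2 hΔ) hΔ]
  linear_combination (4 * b ^ 2 * (b ^ 2 + 2 * b * c + 1)) * hsc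

/-- The locus of tangency points `T(b) = ((b²-1)/Δ, 2b sin γ/Δ)`,
`Δ = b² + 2b cos γ + 1 ≠ 0`, lies on the circle `Γ` given by
`-sin γ (x² + y² - 1) - 2y cos γ = 0`. -/
theorem tangency_locus (γ : ℝ) :
    ∀ b : ℝ, b^2 + 2*b*Real.cos γ + 1 ≠ 0 →
      -Real.sin γ * (((b^2 - 1)/(b^2 + 2*b*Real.cos γ + 1))^2
          + ((2*b*Real.sin γ)/(b^2 + 2*b*Real.cos γ + 1))^2 - 1)
        - 2 * ((2*b*Real.sin γ)/(b^2 + 2*b*Real.cos γ + 1)) * Real.cos γ = 0 := by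
  intro b hΔ
  rw [tangencyPoint_normSq_sub_one (sin_sq_add_cos_sq γ) hΔ]
  ring
end

section
/- Let F(x;γ) = cos x (γ cos γ + sin γ) + x sin x sin γ − sin γ cos γ − γ for 0 < γ < π. Then F(0;γ) = 2 sin²(γ/2)(sin γ − γ) < 0, F(γ;γ) = 0, and F(x;γ) ≤ 0 for all x ∈ [−2π, 2π], with equality only at x = ±γ. -/
/-!
`F(·;γ)` is even and vanishes at `γ`. Its derivative `x cos x sin γ - γ cos γ sin x` has the sign
of `γ - x` on `(0, π)`, because `t ↦ t cot t` is strictly decreasing there; this in turn is the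
angle-addition form of `sin (b - a) / (b - a) > sin (b + a) / (b + a)`, i.e. of `sin t / t`
decreasing. Hence `γ` is the strict maximum of `F(·;γ)` on `[0, π]`. On `[π, 2π]` the term
`x sin x sin γ` is `≤ 0` and the rest is at most `(1 - cos γ)(sin γ - γ)` or
`-(1 + cos γ)(γ + sin γ)`, both negative.
-/

open Real

noncomputable def biarcNumerator (γ x : ℝ) : ℝ :=
  cos x * (γ * cos γ + sin γ) + x * sin x * sin γ - sin γ * cos γ - γ

namespace Real

lemma mul_sin_lt_mul_sin {u v : ℝ} (hu : 0 < u) (huπ : u < π) (huv : u < v) (hv : v ≤ 2 * π) :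
    u * sin v < v * sin u := by
  rcases le_or_gt v π with hvπ | hπv
  · have hslope := strictConcaveOn_sin_Icc.secant_strict_mono (a := 0)
      ⟨le_rfl, pi_pos.le⟩ ⟨hu.le, huπ.le⟩ ⟨hu.le.trans huv.le, hvπ⟩ hu.ne' (hu.trans huv).ne' huv
    simp only [sin_zero, sub_zero] at hslope
    rw [div_lt_div_iff₀ (hu.trans huv) hu] at hslope
    linarith
  · have hsv : sin v ≤ 0 := by
      rw [← sin_sub_two_pi]
      exact sin_nonpos_of_nonpos_of_neg_pi_le (by linarith) (by linarith)
    nlinarith [sin_pos_of_pos_of_lt_pi hu huπ]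

lemma mul_cos_mul_sin_lt {a b : ℝ} (ha : 0 < a) (hab : a < b) (hb : b < π) :
    b * cos b * sin a < a * cos a * sin b := by
  have key := mul_sin_lt_mul_sin (u := b - a) (v := b + a) (by linarith) (by linarith)
    (by linarith) (by linarith)
  rw [sin_sub, sin_add] at key
  linear_combination key / 2

end Real

namespace biarcNumerator

variable (γ : ℝ)

lemma neg_right (x : ℝ) : biarcNumerator γ (-x) = biarcNumerator γ x := by
  simp only [biarcNumerator, cos_neg, sin_neg, neg_mul_neg]

lemma self : biarcNumerator γ γ = 0 := by
  unfold biarcNumerator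
  linear_combination γ * sin_sq_add_cos_sq γ

lemma zero_right : biarcNumerator γ 0 = 2 * sin (γ / 2) ^ 2 * (sin γ - γ) := by
  have hcos : cos γ = 1 - 2 * sin (γ / 2) ^ 2 := by
    have hdouble := cos_two_mul (γ / 2)
    rw [mul_div_cancel₀ γ two_ne_zero] at hdouble
    linear_combination hdouble + 2 * sin_sq_add_cos_sq (γ / 2)
  simp only [biarcNumerator, cos_zero, sin_zero, hcos]
  ring

lemma hasDerivAt (x : ℝ) :
    HasDerivAt (biarcNumerator γ) (x * cos x * sin γ - γ * cos γ * sin x) x := by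
  have h := ((((hasDerivAt_cos x).mul_const (γ * cos γ + sin γ)).add
    (((hasDerivAt_id x).mul (hasDerivAt_sin x)).mul_const (sin γ))).sub_const
    (sin γ * cos γ)).sub_const γ
  exact h.congr_deriv (by simp only [id]; ring)

lemma continuous : Continuous (biarcNumerator γ) := by
  unfold biarcNumerator
  fun_prop

variable {γ}

lemma strictMonoOn_Icc_zero (hγπ : γ < π) :
    StrictMonoOn (biarcNumerator γ) (Set.Icc 0 γ) := by
  refine strictMonoOn_of_deriv_pos (convex_Icc 0 γ) (continuous γ).continuousOn fun t ht => ?_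
  rw [interior_Icc] at ht
  rw [(hasDerivAt γ t).deriv]
  linarith [mul_cos_mul_sin_lt ht.1 ht.2 hγπ]

lemma strictAntiOn_Icc_pi (hγ : 0 < γ) :
    StrictAntiOn (biarcNumerator γ) (Set.Icc γ π) := by
  refine strictAntiOn_of_deriv_neg (convex_Icc γ π) (continuous γ).continuousOn fun t ht => ?_
  rw [interior_Icc] at ht
  rw [(hasDerivAt γ t).deriv]
  linarith [mul_cos_mul_sin_lt hγ ht.1 ht.2]

lemma lt_zero_of_mul_sin_nonpos (hγ : 0 < γ) (hγπ : γ < π) {x : ℝ} (hx : x * sin x ≤ 0) :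
    biarcNumerator γ x < 0 := by
  have hsin : 0 < sin γ := sin_pos_of_pos_of_lt_pi hγ hγπ
  have hsinγ : sin γ < γ := sin_lt hγ
  have hcos : -1 < cos γ ∧ cos γ < 1 := by
    constructor
    · simpa using cos_lt_cos_of_nonneg_of_le_pi hγ.le le_rfl hγπ
    · simpa using cos_lt_cos_of_nonneg_of_le_pi le_rfl hγπ.le hγ
  have hterm : x * sin x * sin γ ≤ 0 := mul_nonpos_of_nonpos_of_nonneg hx hsin.le
  unfold biarcNumerator
  rcases le_or_gt 0 (γ * cos γ + sin γ) with hC | hC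
  · nlinarith [mul_le_of_le_one_left hC (cos_le_one x),
      mul_pos (sub_pos.2 hcos.2) (sub_pos.2 hsinγ)]
  · nlinarith [neg_one_le_cos x, mul_pos (by linarith : (0 : ℝ) < 1 + cos γ)
      (by linarith : (0 : ℝ) < γ + sin γ)]

lemma lt_zero_of_ne (hγ : 0 < γ) (hγπ : γ < π) {x : ℝ} (hx : 0 ≤ x) (hx2π : x ≤ 2 * π)
    (hxγ : x ≠ γ) : biarcNumerator γ x < 0 := by
  rcases le_or_gt x π with hxπ | hπx
  · rw [← self γ]
    rcases hxγ.lt_or_gt with hlt | hgt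
    · exact strictMonoOn_Icc_zero hγπ ⟨hx, hlt.le⟩ ⟨hγ.le, le_rfl⟩ hlt
    · exact strictAntiOn_Icc_pi hγ ⟨le_rfl, hγπ.le⟩ ⟨hgt.le, hxπ⟩ hgt
  · refine lt_zero_of_mul_sin_nonpos hγ hγπ (mul_nonpos_of_nonneg_of_nonpos hx ?_)
    rw [← sin_sub_two_pi]
    exact sin_nonpos_of_nonpos_of_neg_pi_le (by linarith) (by linarith)

lemma lt_zero_of_abs_ne (hγ : 0 < γ) (hγπ : γ < π) {x : ℝ} (hx : x ∈ Set.Icc (-(2 * π)) (2 * π))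
    (hxγ : |x| ≠ γ) : biarcNumerator γ x < 0 := by
  rcases le_total 0 x with h0 | h0
  · exact lt_zero_of_ne hγ hγπ h0 hx.2 (by rwa [abs_of_nonneg h0] at hxγ)
  · rw [← neg_right]
    exact lt_zero_of_ne hγ hγπ (neg_nonneg.2 h0) (by linarith [hx.1])
      (by rwa [abs_of_nonpos h0] at hxγ)

end biarcNumerator

/-- The function `F(x;γ) = cos x (γ cos γ + sin γ) + x sin x sin γ - sin γ cos γ - γ`
for `0 < γ < π` satisfies `F(0;γ) = 2 sin²(γ/2)(sin γ - γ) < 0`, `F(γ;γ) = 0`, and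
`F(x;γ) ≤ 0` on `[-2π, 2π]` with equality only at `x = ±γ`. -/
theorem biarc_length_monotone_aux (γ : ℝ) (hγ0 : 0 < γ) (hγπ : γ < π) :
    (Real.cos 0 * (γ * Real.cos γ + Real.sin γ) + 0 * Real.sin 0 * Real.sin γ
        - Real.sin γ * Real.cos γ - γ
      = 2 * Real.sin (γ/2)^2 * (Real.sin γ - γ)) ∧
    (Real.cos 0 * (γ * Real.cos γ + Real.sin γ) + 0 * Real.sin 0 * Real.sin γ
        - Real.sin γ * Real.cos γ - γ < 0) ∧
    (Real.cos γ * (γ * Real.cos γ + Real.sin γ) + γ * Real.sin γ * Real.sin γ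
        - Real.sin γ * Real.cos γ - γ = 0) ∧
    (∀ x ∈ Set.Icc (-(2*π)) (2*π),
      Real.cos x * (γ * Real.cos γ + Real.sin γ) + x * Real.sin x * Real.sin γ
        - Real.sin γ * Real.cos γ - γ ≤ 0 ∧
      (Real.cos x * (γ * Real.cos γ + Real.sin γ) + x * Real.sin x * Real.sin γ
        - Real.sin γ * Real.cos γ - γ = 0 → x = γ ∨ x = -γ)) := by
  refine ⟨biarcNumerator.zero_right γ,
    biarcNumerator.lt_zero_of_mul_sin_nonpos hγ0 hγπ (by simp), biarcNumerator.self γ,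
    fun x hx => ?_⟩
  change biarcNumerator γ x ≤ 0 ∧ (biarcNumerator γ x = 0 → x = γ ∨ x = -γ)
  by_cases hxγ : |x| = γ
  · have hroot : x = γ ∨ x = -γ := (abs_eq hγ0.le).1 hxγ
    refine ⟨?_, fun _ => hroot⟩
    rcases hroot with rfl | rfl
    · exact (biarcNumerator.self x).le
    · rw [biarcNumerator.neg_right, biarcNumerator.self]
  · have hneg := biarcNumerator.lt_zero_of_abs_ne hγ0 hγπ hx hxγ
    exact ⟨hneg.le, fun h => absurd h hneg.ne⟩
end
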